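/- arXiv:2109.13060 — 4 statements merged into one kernel-verified Lean document; each statement's English description precedes it below -/
import Mathlib

section
/- (Distortion of the visual quasi-metric under isometries) Let X be a separable geodesic Gromov δ-hyperbolic space satisfying (BA). For every isometry g of X and all ξ, η ∈ Bord X: (1/C(δ))·b^{−(h_ξ(g⁻¹x₀) + h_η(g⁻¹x₀))/2} ≤ D̄_b(gξ, gη)/D̄_b(ξ, η) ≤ C(δ)·b^{−(h_ξ(g⁻¹x₀) + h_η(g⁻¹x₀))/2}, where C(δ) = 4b^{6δ}. -/
open Filter Topology MeasureTheory TopologicalSpace ENNReal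

noncomputable section

namespace Paper

variable {X : Type*} [MetricSpace X]


/-- The Gromov product `⟨x,z⟩_y`. -/
def gp (x z y : X) : ℝ := (dist x y + dist z y - dist x z) / 2

/-- `X` is Gromov `δ`-hyperbolic: the 4-point condition. -/
def IsHyperbolic (X : Type*) [MetricSpace X] (δ : ℝ) : Prop :=
  ∀ x y z w : X, gp x z w ≥ min (gp x y w) (gp y z w) - δ

/-- `X` is a geodesic metric space. -/
def IsGeodesic (X : Type*) [MetricSpace X] : Prop :=
  ∀ x y : X, ∃ γ : ℝ → X, γ 0 = x ∧ γ (dist x y) = y ∧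
    ∀ s ∈ Set.Icc (0:ℝ) (dist x y), ∀ t ∈ Set.Icc (0:ℝ) (dist x y),
      dist (γ s) (γ t) = |s - t|

/-- A Gromov sequence (a sequence converging to infinity). -/
def IsGromovSeq (x₀ : X) (u : ℕ → X) : Prop :=
  Tendsto (fun p : ℕ × ℕ => gp (u p.1) (u p.2) x₀) atTop atTop

/-- Equivalence of Gromov sequences. -/
def GromovEquiv (x₀ : X) (u v : ℕ → X) : Prop :=
  Tendsto (fun n => gp (u n) (v n) x₀) atTop atTop

/-- The type of Gromov sequences based at `x₀`. -/
def GromovSeq (x₀ : X) := {u : ℕ → X // IsGromovSeq x₀ u}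

/-- The relation defining the Gromov boundary. -/
def bRel (x₀ : X) (u v : GromovSeq x₀) : Prop := GromovEquiv x₀ u.1 v.1

/-- The Gromov boundary `∂X`: equivalence classes of Gromov sequences. -/
def GromovBoundary (x₀ : X) := Quot (bRel x₀)

/-- `Bord X = X ∪ ∂X`. -/
def Bord (x₀ : X) := X ⊕ GromovBoundary x₀

/-- The extension of the Gromov product to `Bord X`, with values in `EReal`. -/
def egp (x₀ : X) : Bord x₀ → Bord x₀ → X → EReal
  | .inl x, .inl y, z => ((gp x y z : ℝ) : EReal)
  | .inl x, .inr η, z => sInf {t : EReal | ∃ v : GromovSeq x₀, Quot.mk (bRel x₀) v = η ∧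
      t = liminf (fun n => ((gp x (v.1 n) z : ℝ) : EReal)) atTop}
  | .inr ξ, .inl y, z => sInf {t : EReal | ∃ u : GromovSeq x₀, Quot.mk (bRel x₀) u = ξ ∧
      t = liminf (fun n => ((gp (u.1 n) y z : ℝ) : EReal)) atTop}
  | .inr ξ, .inr η, z => sInf {t : EReal | ∃ u v : GromovSeq x₀,
      Quot.mk (bRel x₀) u = ξ ∧ Quot.mk (bRel x₀) v = η ∧
      t = liminf (fun p : ℕ × ℕ => ((gp (u.1 p.1) (v.1 p.2) z : ℝ) : EReal)) atTop}

/-- The visual quasi-metric `ρ_b(ξ,η) = b^{-⟨ξ,η⟩_{x₀}}`. -/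
def rho (x₀ : X) (b : ℝ) (ξ η : Bord x₀) : ℝ :=
  if egp x₀ ξ η x₀ = ⊤ then 0 else b ^ (-(egp x₀ ξ η x₀).toReal)

/-- The `ρ_b`-length of a chain. -/
def chainSum (x₀ : X) (b : ℝ) (l : List (Bord x₀)) : ℝ :=
  ((l.zip l.tail).map fun p => rho x₀ b p.1 p.2).sum

/-- `D̄_b`: the infimum of `ρ_b`-lengths of chains joining two points of `Bord X`. -/
def Dbar (x₀ : X) (b : ℝ) (ξ η : Bord x₀) : ℝ :=
  sInf {s : ℝ | ∃ l : List (Bord x₀), l.head? = some ξ ∧ l.getLast? = some η ∧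
    s = chainSum x₀ b l}

/-- The metric `D_b` on `Bord X`. -/
def Db (x₀ : X) (b : ℝ) : Bord x₀ → Bord x₀ → ℝ
  | .inl x, .inl y => min (Real.log b * dist x y) (Dbar x₀ b (.inl x) (.inl y))
  | ξ, η => Dbar x₀ b ξ η


lemma gp_isom (g : X ≃ᵢ X) (x y z : X) : gp (g x) (g y) z = gp x y (g.symm z) := by
  have h1 : dist x (g.symm z) = dist (g x) z := by
    rw [← g.symm.dist_eq (g x) z, g.symm_apply_apply]
  have h2 : dist y (g.symm z) = dist (g y) z := by
    rw [← g.symm.dist_eq (g y) z, g.symm_apply_apply]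
  have h3 : dist (g x) (g y) = dist x y := g.dist_eq x y
  simp only [gp, h1, h2, h3]

lemma gp_base (x y z w : X) : gp x y z - dist w z ≤ gp x y w := by
  have h1 := dist_triangle x w z
  have h2 := dist_triangle y w z
  have h3 := dist_comm w z
  simp only [gp]
  nlinarith [dist_nonneg (x := x) (y := w)]

lemma isGromovSeq_isom (x₀ : X) (g : X ≃ᵢ X) {u : ℕ → X} (hu : IsGromovSeq x₀ u) :
    IsGromovSeq x₀ fun n => g (u n) := by
  have key : ∀ p : ℕ × ℕ,
      gp (u p.1) (u p.2) x₀ + -(dist (g.symm x₀) x₀) ≤ gp (g (u p.1)) (g (u p.2)) x₀ := by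
    intro p
    rw [gp_isom]
    have := gp_base (u p.1) (u p.2) x₀ (g.symm x₀)
    have hd : dist x₀ (g.symm x₀) = dist (g.symm x₀) x₀ := dist_comm _ _
    linarith [gp_base (u p.1) (u p.2) x₀ (g.symm x₀)]
  exact tendsto_atTop_mono key (tendsto_atTop_add_const_right atTop _ hu)

lemma gromovEquiv_isom (x₀ : X) (g : X ≃ᵢ X) {u v : ℕ → X} (huv : GromovEquiv x₀ u v) :
    GromovEquiv x₀ (fun n => g (u n)) fun n => g (v n) := by
  have key : ∀ n : ℕ,
      gp (u n) (v n) x₀ + -(dist (g.symm x₀) x₀) ≤ gp (g (u n)) (g (v n)) x₀ := by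
    intro n
    rw [gp_isom]
    linarith [gp_base (u n) (v n) x₀ (g.symm x₀)]
  exact tendsto_atTop_mono key (tendsto_atTop_add_const_right atTop _ huv)

/-- The action of an isometry on the Gromov boundary. -/
def bMap (x₀ : X) (g : X ≃ᵢ X) : GromovBoundary x₀ → GromovBoundary x₀ :=
  Quot.map (fun u : GromovSeq x₀ => (⟨fun n => g (u.1 n), isGromovSeq_isom x₀ g u.2⟩ : GromovSeq x₀))
    (fun _ _ h => gromovEquiv_isom x₀ g h)

/-- The action of an isometry on `Bord X`. -/
def bordMap (x₀ : X) (g : X ≃ᵢ X) : Bord x₀ → Bord x₀ :=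
  Sum.map (fun x => g x) (bMap x₀ g)


/-- The metric `d_G` on the isometry group. -/
def dG (x₀ : X) (b : ℝ) (g₁ g₂ : X ≃ᵢ X) : ℝ :=
  max (⨆ ξ : Bord x₀, Db x₀ b (bordMap x₀ g₁ ξ) (bordMap x₀ g₂ ξ))
      (⨆ ξ : Bord x₀, Db x₀ b (bordMap x₀ g₁.symm ξ) (bordMap x₀ g₂.symm ξ))

/-- The isometry group of `X`, as a type tagged by the basepoint `x₀` and the
parameter `b`, carrying the topology induced by the metric `d_G` and its Borel
σ-algebra. -/
def IsomG (X : Type*) [MetricSpace X] (x₀ : X) (b : ℝ) : Type _ := X ≃ᵢ X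

variable {x₀ : X} {b : ℝ}

/-- The underlying isometry. -/
def IsomG.toE (g : IsomG X x₀ b) : X ≃ᵢ X := g

instance : Group (IsomG X x₀ b) := inferInstanceAs (Group (X ≃ᵢ X))

/-- The topology on the isometry group generated by the `d_G`-balls (for a genuine
metric this is the metric topology). -/
instance : TopologicalSpace (IsomG X x₀ b) :=
  TopologicalSpace.generateFrom
    {U | ∃ (g : IsomG X x₀ b) (r : ℝ), U = {g' : IsomG X x₀ b | dG x₀ b g.toE g'.toE < r}}

instance : MeasurableSpace (IsomG X x₀ b) := borel (IsomG X x₀ b)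

/-- `μ` is a compactly supported Borel probability measure with support inside the
set `S`. -/
def ProbOn (S : Set (IsomG X x₀ b)) (μ : Measure (IsomG X x₀ b)) : Prop :=
  IsProbabilityMeasure μ ∧
    ∃ K : Set (IsomG X x₀ b), IsCompact K ∧ K ⊆ S ∧ μ Kᶜ = 0

/-- The set `G_λ = {g ∈ G : b^{d(gx₀,x₀)} < λ}`. -/
def Glam (G : Subgroup (IsomG X x₀ b)) (lam : ℝ) : Set (IsomG X x₀ b) :=
  {g : IsomG X x₀ b | g ∈ G ∧ b ^ dist (g.toE x₀) x₀ < lam}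

/-- Convolution of measures on the isometry group. -/
def conv (μ ν : Measure (IsomG X x₀ b)) : Measure (IsomG X x₀ b) :=
  Measure.map (fun p : IsomG X x₀ b × IsomG X x₀ b => p.1 * p.2) (μ.prod ν)

/-- Convolution powers `μⁿ` (with `μ⁰ = δ_id`). -/
def convPow (μ : Measure (IsomG X x₀ b)) : ℕ → Measure (IsomG X x₀ b)
  | 0 => Measure.dirac 1
  | n + 1 => conv μ (convPow μ n)

/-- `HasDrift μ ℓ`: the drift `ℓ(μ) = lim (1/n) ∫ d(gx₀, x₀) dμⁿ(g)` exists and equals `ℓ`. -/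
def HasDrift (μ : Measure (IsomG X x₀ b)) (ℓ : ℝ) : Prop :=
  Tendsto (fun n : ℕ => (∫ g : IsomG X x₀ b, dist (g.toE x₀) x₀ ∂(convPow μ n)) / n)
    atTop (𝓝 ℓ)

/-- A bounded Borel function with `α`-Hölder constant (w.r.t. `d_G`) at most 1. -/
def Holder1 (α : ℝ) (φ : IsomG X x₀ b → ℝ) : Prop :=
  Measurable φ ∧ (∃ C : ℝ, ∀ g, |φ g| ≤ C) ∧
    ∀ g g' : IsomG X x₀ b, |φ g - φ g'| ≤ dG x₀ b g.toE g'.toE ^ α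

/-- The `α`-Hölder Wasserstein distance `W_α`. -/
def Wass (α : ℝ) (μ ν : Measure (IsomG X x₀ b)) : ℝ :=
  sSup {t : ℝ | ∃ φ : IsomG X x₀ b → ℝ, Holder1 α φ ∧
    t = |(∫ g, φ g ∂μ) - ∫ g, φ g ∂ν|}

/-- The function `h_x = d(·,x) - d(x,x₀)`. -/
def hfun (x₀ x : X) : X → ℝ := fun z => dist z x - dist x x₀

/-- The horofunction compactification: the closure of `{h_x : x ∈ X}` in the topology of
pointwise convergence. -/
def Xh (x₀ : X) : Set (X → ℝ) := closure (Set.range (hfun x₀))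

/-- The infinite part `X^h_∞` of the horofunction compactification. -/
def XhInf (x₀ : X) : Set (X → ℝ) := {h ∈ Xh x₀ | ¬ BddBelow (Set.range h)}

/-- The action of isometries on horofunctions: `(g·h)(z) = h(g⁻¹z) - h(g⁻¹x₀)`. -/
def horoAct (x₀ : X) (g : X ≃ᵢ X) (h : X → ℝ) : X → ℝ :=
  fun z => h (g.symm z) - h (g.symm x₀)

/-- `μ` is irreducible: no horofunction is fixed by `μ`-almost every `g`. -/
def IrredMeasure (μ : Measure (IsomG X x₀ b)) : Prop :=
  ¬ ∃ h ∈ Xh x₀, ∀ᵐ g ∂μ, horoAct x₀ (IsomG.toE g) h = h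

/-- The Gromov boundary, tagged by `b`, carrying the visual topology generated by the
`D̄_b`-balls and its Borel σ-algebra. -/
def Bdry (x₀ : X) (b : ℝ) := GromovBoundary x₀

def Bdry.toB (ξ : Bdry x₀ b) : GromovBoundary x₀ := ξ

def Bdry.ofB (x₀ : X) (b : ℝ) (ξ : GromovBoundary x₀) : Bdry x₀ b := ξ

instance : TopologicalSpace (Bdry x₀ b) :=
  TopologicalSpace.generateFrom
    {U | ∃ (ξ : Bdry x₀ b) (r : ℝ),
      U = {η : Bdry x₀ b | Dbar x₀ b (Sum.inr ξ.toB) (Sum.inr η.toB) < r}}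

instance : MeasurableSpace (Bdry x₀ b) := borel (Bdry x₀ b)

/-- The action of `g⁻¹` on the boundary (the convention used for stationary measures). -/
def bdryAct (g : IsomG X x₀ b) (ξ : Bdry x₀ b) : Bdry x₀ b :=
  Bdry.ofB x₀ b (bMap x₀ (IsomG.toE g).symm ξ.toB)

/-- `ν` is `μ`-stationary for the action `(g,ξ) ↦ g⁻¹ξ` of `G` on `∂X`. -/
def Stationary (μ : Measure (IsomG X x₀ b)) (ν : Measure (Bdry x₀ b)) : Prop :=
  μ.bind (fun g => Measure.map (bdryAct g) ν) = ν

/-- The Markov operator `(Q_μ f)(ξ) = ∫ f(g⁻¹ξ) dμ(g)`. -/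
def Qop (μ : Measure (IsomG X x₀ b)) (f : Bdry x₀ b → ℝ) : Bdry x₀ b → ℝ :=
  fun ξ => ∫ g : IsomG X x₀ b, f (bdryAct g ξ) ∂μ

/-- Iterates of the Markov operator. -/
def QopIter (μ : Measure (IsomG X x₀ b)) (f : Bdry x₀ b → ℝ) : ℕ → (Bdry x₀ b → ℝ)
  | 0 => f
  | n + 1 => Qop μ (QopIter μ f n)

/-- The `α`-Hölder constant `υ_α(f)` of a function on the boundary (valued in `ℝ≥0∞`),
w.r.t. the visual metric `D_b = D̄_b` on `∂X`. -/
def holdC (α : ℝ) (f : Bdry x₀ b → ℝ) : ℝ≥0∞ :=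
  ⨆ (p : Bdry x₀ b × Bdry x₀ b) (_ : p.1 ≠ p.2),
    ENNReal.ofReal (|f p.1 - f p.2| / Dbar x₀ b (Sum.inr p.1.toB) (Sum.inr p.2.toB) ^ α)

/-- `f` belongs to the Banach algebra `H_α(∂X)` of bounded Borel boundary Hölder
continuous functions. -/
def MemHolder (α : ℝ) (f : Bdry x₀ b → ℝ) : Prop :=
  Measurable f ∧ (∃ C : ℝ, ∀ ξ, |f ξ| ≤ C) ∧ holdC α f ≠ ⊤

/-- The average Hölder constant `k_α^n(μ)` (valued in `ℝ≥0∞`). -/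
def kcoef (α : ℝ) (μ : Measure (IsomG X x₀ b)) (n : ℕ) : ℝ≥0∞ :=
  ⨆ (p : Bdry x₀ b × Bdry x₀ b) (_ : p.1 ≠ p.2),
    ENNReal.ofReal (∫ g : IsomG X x₀ b,
      (Dbar x₀ b (Sum.inr (bdryAct g p.1).toB) (Sum.inr (bdryAct g p.2).toB) /
        Dbar x₀ b (Sum.inr p.1.toB) (Sum.inr p.2.toB)) ^ α ∂(convPow μ n))

/-- The local-minimum map and its inverse witness the basic assumption (BA): `φ` is a
`G`-equivariant homeomorphism from `X^h_∞` onto `∂X` sending a horofunction to the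
equivalence class of any sequence along which it tends to `-∞`. -/
structure BasicAssumption (x₀ : X) (b : ℝ) (lm : (X → ℝ) → Bdry x₀ b)
    (hinv : Bdry x₀ b → (X → ℝ)) : Prop where
  localMin : ∀ h ∈ XhInf x₀, ∀ y : ℕ → X,
    Tendsto (fun n => h (y n)) atTop atBot →
      ∃ hy : IsGromovSeq x₀ y, (lm h).toB = Quot.mk (bRel x₀) (⟨y, hy⟩ : GromovSeq x₀)
  contOn : ContinuousOn lm (XhInf x₀)
  inv_mem : ∀ ξ : Bdry x₀ b, hinv ξ ∈ XhInf x₀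
  left_inv : ∀ h ∈ XhInf x₀, hinv (lm h) = h
  right_inv : ∀ ξ : Bdry x₀ b, lm (hinv ξ) = ξ
  cont_inv : Continuous hinv

/-- The horofunction `h_ξ` associated to a point of `Bord X` (for `ξ ∈ X` this is `h_x`,
for `ξ ∈ ∂X` it is the horofunction corresponding to `ξ` under (BA)). -/
def hB (x₀ : X) (b : ℝ) (hinv : Bdry x₀ b → (X → ℝ)) : Bord x₀ → (X → ℝ)
  | .inl x => hfun x₀ x
  | .inr ξ => hinv (Bdry.ofB x₀ b ξ)

/-- `P` is the product measure `μ^ℕ` on `Ω = G^ℕ`. -/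
def IsProductMeasure (μ : Measure (IsomG X x₀ b)) (P : Measure (ℕ → IsomG X x₀ b)) : Prop :=
  IsProbabilityMeasure P ∧
    ∀ (n : ℕ) (E : Fin n → Set (IsomG X x₀ b)), (∀ i, MeasurableSet (E i)) →
      P {ω | ∀ i : Fin n, ω i ∈ E i} = ∏ i : Fin n, μ (E i)

/-- `ωⁿ = g₀g₁⋯g_{n-1}`. -/
def prodN (ω : ℕ → IsomG X x₀ b) (n : ℕ) : IsomG X x₀ b :=
  ((List.range n).map ω).prod


/-!
Write `y = g⁻¹x₀`. Moving the basepoint gives the identity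
`⟨u, v⟩_y = ⟨u, v⟩_{x₀} + d(y, x₀) - ⟨y, u⟩_{x₀} - ⟨y, v⟩_{x₀}`, and along any sequence `u`
representing `ξ` the product `⟨y, u_n⟩_{x₀}` is eventually `2δ`-close to `(d(y, x₀) - h_ξ(y)) / 2`.
For the latter, the two four-point inequalities relating `y`, `z` and `h` are closed conditions on
`h`, so they pass from the functions `h_x` to their pointwise limits; they pin down `⟨y, z⟩_{x₀}`
once `h_ξ(z)` is very negative, and (BA) supplies such points `z_k` forming a sequence in the class
of `ξ`. Hence `⟨gξ, gη⟩_{x₀} = ⟨ξ, η⟩_y` lies within `4δ` of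
`⟨ξ, η⟩_{x₀} + (h_ξ(y) + h_η(y)) / 2`, which distorts `ρ_b` by the stated factor up to `b^{±4δ}`.
Finally `b^δ ≤ 2` makes `ρ_b` a `2`-quasi-ultrametric, so Frink's chain lemma gives
`D̄_b ≤ ρ_b ≤ 4 D̄_b` off the diagonal, and the distortion of `ρ_b` passes to `D̄_b`.
-/

section GromovProduct

variable {δ : ℝ}

lemma gp_comm (x y z : X) : gp x y z = gp y x z := by
  unfold gp; rw [dist_comm x y]; ring

lemma gp_nonneg (x y z : X) : 0 ≤ gp x y z := by
  unfold gp; linarith [dist_triangle x z y, dist_comm z y]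

lemma gp_le_dist (x y z : X) : gp x y z ≤ dist x z := by
  unfold gp; linarith [dist_triangle y x z, dist_comm x y]

lemma gp_eq_gp_add_dist_sub (u v y w : X) :
    gp u v y = gp u v w + dist y w - gp y u w - gp y v w := by
  unfold gp; rw [dist_comm u y, dist_comm v y]; ring

lemma IsGromovSeq.gromovEquiv_self {u : ℕ → X} (hu : IsGromovSeq x₀ u) : GromovEquiv x₀ u u :=
  hu.comp tendsto_atTop_diagonal

lemma GromovEquiv.symm {u v : ℕ → X} (h : GromovEquiv x₀ u v) : GromovEquiv x₀ v u := by
  simpa only [GromovEquiv, gp_comm (v _)] using h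

lemma GromovEquiv.trans (hhyp : IsHyperbolic X δ) {u v w : ℕ → X}
    (huv : GromovEquiv x₀ u v) (hvw : GromovEquiv x₀ v w) : GromovEquiv x₀ u w := by
  refine tendsto_atTop.2 fun C => ?_
  filter_upwards [tendsto_atTop.1 huv (C + δ), tendsto_atTop.1 hvw (C + δ)] with n h1 h2
  linarith [hhyp (u n) (v n) (w n) x₀, le_min h1 h2]

lemma gromovEquiv_of_mk_eq (hhyp : IsHyperbolic X δ) {u v : GromovSeq x₀}
    (h : Quot.mk (bRel x₀) u = Quot.mk (bRel x₀) v) : GromovEquiv x₀ u.1 v.1 :=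
  have hequiv : Equivalence (bRel x₀) :=
    ⟨fun u => u.2.gromovEquiv_self, GromovEquiv.symm, GromovEquiv.trans hhyp⟩
  hequiv.eqvGen_iff.1 (Quot.eqvGen_exact h)

lemma GromovEquiv.exists_forall_le_gp (hhyp : IsHyperbolic X δ) {z u : ℕ → X}
    (hz : IsGromovSeq x₀ z) (hzu : GromovEquiv x₀ z u) (L : ℝ) :
    ∃ N, ∀ k ≥ N, ∀ n ≥ N, L ≤ gp (z k) (u n) x₀ := by
  obtain ⟨N₁, hN₁⟩ := eventually_atTop_prod_self'.1 (tendsto_atTop.1 hz (L + δ))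
  obtain ⟨N₂, hN₂⟩ := eventually_atTop.1 (tendsto_atTop.1 hzu (L + δ))
  refine ⟨max N₁ N₂, fun k hk n hn => ?_⟩
  have h1 := hN₁ k (le_of_max_le_left hk) n (le_of_max_le_left hn)
  have h2 := hN₂ n (le_of_max_le_right hn)
  linarith [hhyp (z k) (z n) (u n) x₀, le_min h1 h2]

lemma GromovEquiv.eventually_abs_gp_sub_le (hhyp : IsHyperbolic X δ) {z u : ℕ → X}
    (hz : IsGromovSeq x₀ z) (hzu : GromovEquiv x₀ z u) {y : X} {c : ℝ}
    (hzc : ∀ᶠ k in atTop, |gp y (z k) x₀ - c| ≤ δ) :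
    ∀ᶠ n in atTop, |gp y (u n) x₀ - c| ≤ 2 * δ := by
  obtain ⟨N, hN⟩ := hzu.exists_forall_le_gp hhyp hz (max (dist y x₀) (c - δ))
  obtain ⟨k, hkc, hkN⟩ := (hzc.and (eventually_ge_atTop N)).exists
  filter_upwards [eventually_ge_atTop N] with n hn
  have hL := hN k hkN n hn
  have hlow := hhyp y (z k) (u n) x₀
  have hup := hhyp y (u n) (z k) x₀
  have hyu := gp_le_dist y (u n) x₀
  rw [gp_comm (u n)] at hup
  rw [abs_le] at hkc ⊢
  have h1 : min (gp y (z k) x₀) (gp (z k) (u n) x₀) ≥ c - δ :=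
    le_min (by linarith) (by linarith [le_max_right (dist y x₀) (c - δ)])
  have h2 : min (gp y (u n) x₀) (gp (z k) (u n) x₀) = gp y (u n) x₀ :=
    min_eq_left (by linarith [le_max_left (dist y x₀) (c - δ)])
  constructor <;> linarith

end GromovProduct

section Horofunction

variable {δ : ℝ} {h : X → ℝ}

/-- Stands in for the Gromov product `⟨y, ξ⟩_{x₀}` when `h = h_ξ`. -/
def gpHoro (x₀ : X) (h : X → ℝ) (y : X) : ℝ := (dist y x₀ - h y) / 2

lemma gpHoro_hfun (x y : X) : gpHoro x₀ (hfun x₀ x) y = gp y x x₀ := by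
  unfold gpHoro hfun gp; ring

lemma continuous_gpHoro (y : X) : Continuous fun f : X → ℝ => gpHoro x₀ f y := by
  unfold gpHoro; fun_prop

lemma Xh_induction {P : (X → ℝ) → Prop} (hP : IsClosed {f | P f}) (hx : ∀ x, P (hfun x₀ x))
    (hh : h ∈ Xh x₀) : P h :=
  closure_minimal (Set.range_subset_iff.2 hx) hP hh

lemma gpHoro_mem_Icc (hh : h ∈ Xh x₀) (y : X) : gpHoro x₀ h y ∈ Set.Icc 0 (dist y x₀) :=
  Xh_induction (P := fun f => gpHoro x₀ f y ∈ Set.Icc 0 (dist y x₀))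
    (isClosed_Icc.preimage (continuous_gpHoro y))
    (fun x => by rw [gpHoro_hfun]; exact ⟨gp_nonneg _ _ _, gp_le_dist _ _ _⟩) hh

lemma min_gpHoro_le_gp_add (hhyp : IsHyperbolic X δ) (hh : h ∈ Xh x₀) (y z : X) :
    min (gpHoro x₀ h y) (gpHoro x₀ h z) ≤ gp y z x₀ + δ :=
  Xh_induction (P := fun f => min (gpHoro x₀ f y) (gpHoro x₀ f z) ≤ gp y z x₀ + δ)
    (isClosed_le ((continuous_gpHoro y).min (continuous_gpHoro z)) continuous_const)
    (fun x => by
      rw [gpHoro_hfun, gpHoro_hfun, gp_comm z]; linarith [hhyp y x z x₀]) hh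

lemma min_gp_gpHoro_le_gpHoro_add (hhyp : IsHyperbolic X δ) (hh : h ∈ Xh x₀) (y z : X) :
    min (gp y z x₀) (gpHoro x₀ h z) ≤ gpHoro x₀ h y + δ :=
  Xh_induction (P := fun f => min (gp y z x₀) (gpHoro x₀ f z) ≤ gpHoro x₀ f y + δ)
    (isClosed_le (continuous_const.min (continuous_gpHoro z))
      ((continuous_gpHoro y).add continuous_const))
    (fun x => by rw [gpHoro_hfun, gpHoro_hfun]; linarith [hhyp y z x x₀]) hh

lemma abs_gp_sub_gpHoro_le (hhyp : IsHyperbolic X δ) (hh : h ∈ Xh x₀) {y z : X}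
    (hz : h z ≤ -dist y x₀) : |gp y z x₀ - gpHoro x₀ h y| ≤ δ := by
  have hy := gpHoro_mem_Icc hh y
  have hz' := gpHoro_mem_Icc hh z
  have hyz := gp_le_dist y z x₀
  have hzd : dist y x₀ ≤ gpHoro x₀ h z := by
    have := hz'.2; unfold gpHoro at this ⊢; linarith
  have h1 := min_gpHoro_le_gp_add hhyp hh y z
  have h2 := min_gp_gpHoro_le_gpHoro_add hhyp hh y z
  rw [min_eq_left (hy.2.trans hzd)] at h1
  rw [min_eq_left (hyz.trans hzd)] at h2
  rw [abs_le]; constructor <;> linarith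

end Horofunction

section ExtendedGromovProduct

variable {δ : ℝ}

/-- As in the four cases of `egp`, a point of `X` is represented by its constant sequence only. -/
def representingSeqs (x₀ : X) : Bord x₀ → Set (ℕ → X)
  | .inl x => {fun _ => x}
  | .inr ξ => {u | ∃ v : GromovSeq x₀, Quot.mk (bRel x₀) v = ξ ∧ v.1 = u}

lemma representingSeqs_nonempty (α : Bord x₀) : (representingSeqs x₀ α).Nonempty := by
  cases α with
  | inl x => exact ⟨_, rfl⟩
  | inr ξ =>
    obtain ⟨u, hu⟩ := Quot.exists_rep ξ
    exact ⟨u.1, u, hu, rfl⟩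

def gpLiminf (u v : ℕ → X) (z : X) : EReal :=
  liminf (fun p : ℕ × ℕ => ((gp (u p.1) (v p.2) z : ℝ) : EReal)) atTop

lemma liminf_comp_fst {β : Type*} [CompleteLattice β] (f : ℕ → β) :
    liminf (fun p : ℕ × ℕ => f p.1) atTop = liminf f atTop := by
  rw [← prod_atTop_atTop_eq, ← Function.comp_def, liminf_comp, map_fst_prod]

lemma liminf_comp_snd {β : Type*} [CompleteLattice β] (f : ℕ → β) :
    liminf (fun p : ℕ × ℕ => f p.2) atTop = liminf f atTop := by
  rw [← prod_atTop_atTop_eq, ← Function.comp_def, liminf_comp, map_snd_prod]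

lemma egp_eq_sInf (α β : Bord x₀) (z : X) :
    egp x₀ α β z = sInf {t | ∃ u ∈ representingSeqs x₀ α, ∃ v ∈ representingSeqs x₀ β,
      t = gpLiminf u v z} := by
  rcases α with x | ξ <;> rcases β with y | η <;>
    simp only [egp, representingSeqs, gpLiminf, Set.mem_singleton_iff, Set.mem_ofPred_eq,
      exists_eq_left, exists_exists_and_eq_and, liminf_const, Set.ofPred_eq_eq_singleton,
      sInf_singleton, exists_and_left]
  all_goals refine congrArg sInf (Set.ext fun t => exists_congr fun v => and_congr_right fun _ => ?_)
  · rw [← liminf_comp_snd]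
  · rw [← liminf_comp_fst]

def addCoeOrderIso (c : ℝ) : EReal ≃o EReal where
  toFun x := x + c
  invFun x := x - c
  left_inv _ := EReal.add_sub_cancel_right
  right_inv _ := EReal.sub_add_cancel
  map_rel_iff' := (EReal.addLECancellable_coe c).add_le_add_iff_right

lemma addCoeOrderIso_apply (c : ℝ) (x : EReal) : addCoeOrderIso c x = x + c := rfl

lemma liminf_coe_add_coe {α : Type*} {F : Filter α} (f : α → ℝ) (c : ℝ) :
    liminf (fun a => ((f a + c : ℝ) : EReal)) F = liminf (fun a => (f a : EReal)) F + c := by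
  simpa only [EReal.coe_add, addCoeOrderIso_apply] using
    ((addCoeOrderIso c).liminf_apply (u := fun a => (f a : EReal)) (f := F)).symm

lemma le_sInf_add_coe {a : EReal} {s : Set EReal} {c : ℝ} (h : ∀ t ∈ s, a ≤ t + c) :
    a ≤ sInf s + c := by
  rw [← addCoeOrderIso_apply, OrderIso.map_sInf]
  exact le_iInf₂ h

lemma gpLiminf_nonneg (u v : ℕ → X) (z : X) : 0 ≤ gpLiminf u v z :=
  le_liminf_of_le (h := Eventually.of_forall fun _ => EReal.coe_nonneg.2 (gp_nonneg _ _ _))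

lemma egp_nonneg (α β : Bord x₀) (z : X) : 0 ≤ egp x₀ α β z := by
  rw [egp_eq_sInf]
  exact le_sInf fun t ⟨u, _, v, _, ht⟩ => ht ▸ gpLiminf_nonneg u v z

lemma egp_ne_bot (α β : Bord x₀) (z : X) : egp x₀ α β z ≠ ⊥ :=
  ne_bot_of_le_ne_bot EReal.zero_ne_bot (egp_nonneg α β z)

lemma egp_le_gpLiminf {α β : Bord x₀} {u v : ℕ → X} (hu : u ∈ representingSeqs x₀ α)
    (hv : v ∈ representingSeqs x₀ β) (z : X) : egp x₀ α β z ≤ gpLiminf u v z := by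
  rw [egp_eq_sInf]
  exact sInf_le ⟨u, hu, v, hv, rfl⟩

lemma min_gpLiminf_le_gpLiminf_add (hhyp : IsHyperbolic X δ) (u v w : ℕ → X) :
    min (gpLiminf u v x₀) (gpLiminf v w x₀) ≤ gpLiminf u w x₀ + δ := by
  refine EReal.ge_of_forall_gt_iff_ge.1 fun r hr => ?_
  obtain ⟨⟨M, K₁⟩, hMK⟩ := eventually_atTop.1 (eventually_lt_of_lt_liminf (lt_min_iff.1 hr).1)
  obtain ⟨⟨K₂, N⟩, hKN⟩ := eventually_atTop.1 (eventually_lt_of_lt_liminf (lt_min_iff.1 hr).2)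
  rw [gpLiminf, ← liminf_coe_add_coe]
  refine le_liminf_of_le (h := eventually_atTop.2 ⟨(M, N), fun p hp => ?_⟩)
  have h1 := hMK (p.1, max K₁ K₂) ⟨hp.1, le_max_left _ _⟩
  have h2 := hKN (max K₁ K₂, p.2) ⟨le_max_right _ _, hp.2⟩
  simp only [EReal.coe_lt_coe_iff] at h1 h2
  exact EReal.coe_le_coe_iff.2 (by linarith [hhyp (u p.1) (v (max K₁ K₂)) (w p.2) x₀, le_min h1.le h2.le])

lemma min_egp_le_egp_add (hhyp : IsHyperbolic X δ) (α β γ : Bord x₀) :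
    min (egp x₀ α β x₀) (egp x₀ β γ x₀) ≤ egp x₀ α γ x₀ + δ := by
  obtain ⟨v, hv⟩ := representingSeqs_nonempty β
  rw [egp_eq_sInf α γ]
  refine le_sInf_add_coe fun t ⟨u, hu, w, hw, ht⟩ => ht ▸ ?_
  exact (min_le_min (egp_le_gpLiminf hu hv x₀) (egp_le_gpLiminf hv hw x₀)).trans
    (min_gpLiminf_le_gpLiminf_add hhyp u v w)

end ExtendedGromovProduct

section VisualQuasiMetric

variable {δ : ℝ}

/-- At `⊥` the value is junk (`1`), hence the hypotheses `A ≠ ⊥` below. -/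
def rpowNegEReal (b : ℝ) (A : EReal) : ℝ := if A = ⊤ then 0 else b ^ (-A.toReal)

lemma rho_eq_rpowNegEReal (ξ η : Bord x₀) : rho x₀ b ξ η = rpowNegEReal b (egp x₀ ξ η x₀) := rfl

lemma rpowNegEReal_nonneg (hb : 0 < b) (A : EReal) : 0 ≤ rpowNegEReal b A := by
  unfold rpowNegEReal; split_ifs
  exacts [le_rfl, (Real.rpow_pos_of_pos hb _).le]

lemma rpowNegEReal_le_rpowNegEReal (hb : 1 ≤ b) {A B : EReal} (hA : A ≠ ⊥) (hAB : A ≤ B) :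
    rpowNegEReal b B ≤ rpowNegEReal b A := by
  by_cases hB : B = ⊤
  · rw [hB, rpowNegEReal, if_pos rfl]; exact rpowNegEReal_nonneg (by linarith) A
  · have hA' : A ≠ ⊤ := ne_top_of_le_ne_top hB hAB
    rw [rpowNegEReal, rpowNegEReal, if_neg hB, if_neg hA']
    exact Real.rpow_le_rpow_of_exponent_le hb (neg_le_neg (EReal.toReal_le_toReal hAB hA hB))

lemma rpowNegEReal_add_coe (hb : 0 < b) {A : EReal} (hA : A ≠ ⊥) (r : ℝ) :
    rpowNegEReal b (A + r) = b ^ (-r) * rpowNegEReal b A := by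
  induction A with
  | bot => exact absurd rfl hA
  | coe a =>
    rw [← EReal.coe_add, rpowNegEReal, rpowNegEReal, if_neg (EReal.coe_ne_top _),
      if_neg (EReal.coe_ne_top _), EReal.toReal_coe, EReal.toReal_coe, neg_add, Real.rpow_add hb,
      mul_comm]
  | top => simp [rpowNegEReal]

lemma rho_nonneg (hb : 0 < b) (ξ η : Bord x₀) : 0 ≤ rho x₀ b ξ η :=
  rpowNegEReal_nonneg hb _

lemma rho_le_rpow_mul_max (hb : 1 ≤ b) (hhyp : IsHyperbolic X δ) (α β γ : Bord x₀) :
    rho x₀ b α γ ≤ b ^ δ * max (rho x₀ b α β) (rho x₀ b β γ) := by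
  have hb0 : 0 < b := by linarith
  simp only [rho_eq_rpowNegEReal]
  set A := egp x₀ α β x₀
  set B := egp x₀ β γ x₀
  have hA := egp_ne_bot α β x₀
  have hB := egp_ne_bot β γ x₀
  have hmin : rpowNegEReal b (min A B) = max (rpowNegEReal b A) (rpowNegEReal b B) := by
    rcases le_total A B with h | h
    · rw [min_eq_left h, max_eq_left (rpowNegEReal_le_rpowNegEReal hb hA h)]
    · rw [min_eq_right h, max_eq_right (rpowNegEReal_le_rpowNegEReal hb hB h)]
  have key : b ^ (-δ) * rpowNegEReal b (egp x₀ α γ x₀) ≤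
      max (rpowNegEReal b A) (rpowNegEReal b B) := by
    rw [← rpowNegEReal_add_coe hb0 (egp_ne_bot _ _ _), ← hmin]
    exact rpowNegEReal_le_rpowNegEReal hb
      (lt_min (bot_lt_iff_ne_bot.2 hA) (bot_lt_iff_ne_bot.2 hB)).ne' (min_egp_le_egp_add hhyp α β γ)
  calc rpowNegEReal b (egp x₀ α γ x₀)
        = b ^ δ * (b ^ (-δ) * rpowNegEReal b (egp x₀ α γ x₀)) := by
        rw [← mul_assoc, ← Real.rpow_add hb0, add_neg_cancel, Real.rpow_zero, one_mul]
    _ ≤ _ := by gcongr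

lemma rpow_le_of_le_rpow_one_div {c : ℝ} (hδ : 0 < δ) (hb : 0 ≤ b) (hc : 0 ≤ c)
    (hbc : b ≤ c ^ (1 / δ)) : b ^ δ ≤ c := by
  calc b ^ δ ≤ (c ^ (1 / δ)) ^ δ := Real.rpow_le_rpow hb hbc hδ.le
    _ = c := by rw [← Real.rpow_mul hc, one_div_mul_cancel hδ.ne', Real.rpow_one]

lemma rho_le_two_mul_max (hδ : 0 < δ) (hb : 1 < b) (hb2 : b ≤ (2:ℝ) ^ (1/δ))
    (hhyp : IsHyperbolic X δ) (α β γ : Bord x₀) :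
    rho x₀ b α γ ≤ 2 * max (rho x₀ b α β) (rho x₀ b β γ) :=
  (rho_le_rpow_mul_max hb.le hhyp α β γ).trans (mul_le_mul_of_nonneg_right
    (rpow_le_of_le_rpow_one_div hδ (by linarith) zero_le_two hb2)
    ((rho_nonneg (by linarith) α β).trans (le_max_left _ _)))

end VisualQuasiMetric

section Frink

open Finset

variable {Y : Type*} {ρ : Y → Y → ℝ}

/-- Position of the midpoint of the edge `[f i, f (i + 1)]` when the chain `f` is laid out on the
real line with edge lengths `ρ`. -/
def chainMidpoint (ρ : Y → Y → ℝ) (f : ℕ → Y) (i : ℕ) : ℝ :=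
  ∑ j ∈ range i, ρ (f j) (f (j + 1)) + ρ (f i) (f (i + 1)) / 2

lemma add_le_two_mul_chainMidpoint_sub (h0 : ∀ a b, 0 ≤ ρ a b) (f : ℕ → Y) {i j : ℕ}
    (hij : i < j) :
    ρ (f i) (f (i + 1)) + ρ (f j) (f (j + 1)) ≤ 2 * (chainMidpoint ρ f j - chainMidpoint ρ f i) := by
  have h : ∑ k ∈ range (i + 1), ρ (f k) (f (k + 1)) ≤ ∑ k ∈ range j, ρ (f k) (f (k + 1)) :=
    sum_le_sum_of_subset_of_nonneg (range_subset_range.2 hij) fun _ _ _ => h0 _ _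
  rw [sum_range_succ] at h
  unfold chainMidpoint; linarith

/-- Split the chain at the first edge whose midpoint passes the middle of the range of midpoints:
both halves then have at most half the spread. -/
lemma le_four_mul_chainMidpoint_sub (h0 : ∀ a b, 0 ≤ ρ a b)
    (hq : ∀ a b c, ρ a c ≤ 2 * max (ρ a b) (ρ b c)) (f : ℕ → Y) {a m : ℕ} (ham : a < m) :
    ρ (f a) (f (m + 1)) ≤ 4 * (chainMidpoint ρ f m - chainMidpoint ρ f a) := by
  induction hd : m - a using Nat.strong_induction_on generalizing a m with
  | _ d ih =>
  obtain ⟨W, hW⟩ : ∃ W, W = chainMidpoint ρ f m - chainMidpoint ρ f a := ⟨_, rfl⟩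
  rw [← hW]
  have hedges := add_le_two_mul_chainMidpoint_sub h0 f ham
  have hea := h0 (f a) (f (a + 1))
  have hem := h0 (f m) (f (m + 1))
  have hex : ∃ p, a < p ∧ chainMidpoint ρ f a + W / 2 ≤ chainMidpoint ρ f p :=
    ⟨m, ham, by linarith⟩
  obtain ⟨p, ⟨hap, hp⟩, hpmin⟩ : ∃ p, (a < p ∧ chainMidpoint ρ f a + W / 2 ≤ chainMidpoint ρ f p)
      ∧ ∀ q < p, ¬(a < q ∧ chainMidpoint ρ f a + W / 2 ≤ chainMidpoint ρ f q) :=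
    ⟨Nat.find hex, Nat.find_spec hex, fun _ => Nat.find_min hex⟩
  have hpm : p ≤ m := not_lt.1 fun h => hpmin m h ⟨ham, by linarith⟩
  have hleft : ρ (f a) (f p) ≤ 2 * W := by
    obtain ⟨q, rfl⟩ : ∃ q, p = q + 1 := ⟨p - 1, by omega⟩
    rcases Nat.lt_or_ge a q with haq | hqa
    · have hq' : chainMidpoint ρ f q < chainMidpoint ρ f a + W / 2 :=
        not_le.1 fun h => hpmin q (by omega) ⟨haq, h⟩
      linarith [ih (q - a) (by omega) haq rfl]
    · rw [show q = a by omega]; linarith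
  have hright : ρ (f p) (f (m + 1)) ≤ 2 * W := by
    rcases hpm.lt_or_eq with hpm | rfl
    · linarith [ih (m - p) (by omega) hpm rfl]
    · linarith
  calc ρ (f a) (f (m + 1)) ≤ 2 * max (ρ (f a) (f p)) (ρ (f p) (f (m + 1))) := hq _ _ _
    _ ≤ 2 * (2 * W) := by gcongr; exact max_le hleft hright
    _ = 4 * W := by ring

theorem le_four_mul_sum_of_le_two_mul_max (h0 : ∀ a b, 0 ≤ ρ a b)
    (hq : ∀ a b c, ρ a c ≤ 2 * max (ρ a b) (ρ b c)) (f : ℕ → Y) {n : ℕ} (hn : 1 ≤ n) :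
    ρ (f 0) (f n) ≤ 4 * ∑ i ∈ range n, ρ (f i) (f (i + 1)) := by
  obtain ⟨m, rfl⟩ : ∃ m, n = m + 1 := ⟨n - 1, by omega⟩
  rcases Nat.eq_zero_or_pos m with rfl | hm
  · rw [sum_range_one]; linarith [h0 (f 0) (f 1)]
  · have h := le_four_mul_chainMidpoint_sub h0 hq f hm
    unfold chainMidpoint at h
    rw [sum_range_succ]
    linarith [h0 (f 0) (f 1), h0 (f m) (f (m + 1)), sum_range_zero fun j => ρ (f j) (f (j + 1))]

end Frink

section ChainDistance

open Finset

lemma sum_map_zip_tail_eq_sum_range {α : Type*} (F : α → α → ℝ) (d : α) :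
    ∀ l : List α, ((l.zip l.tail).map fun p => F p.1 p.2).sum =
      ∑ i ∈ range (l.length - 1), F (l.getD i d) (l.getD (i + 1) d)
  | [] => by simp
  | [_] => by simp
  | a :: a' :: t => by
    have ih := sum_map_zip_tail_eq_sum_range F d (a' :: t)
    simp only [List.tail_cons, List.length_cons, Nat.add_sub_cancel] at ih ⊢
    rw [List.zip_cons_cons, List.map_cons, List.sum_cons, ih, Finset.sum_range_succ' _ (t.length)]
    simp only [List.getD_cons_succ, List.getD_cons_zero, zero_add]
    exact add_comm _ _

lemma chainSum_nonneg (hb : 0 < b) (l : List (Bord x₀)) : 0 ≤ chainSum x₀ b l :=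
  List.sum_nonneg fun _ hx => by
    obtain ⟨p, _, rfl⟩ := List.mem_map.1 hx
    exact rho_nonneg hb _ _

lemma rho_le_four_mul_chainSum (hb : 0 < b)
    (hq : ∀ α β γ : Bord x₀, rho x₀ b α γ ≤ 2 * max (rho x₀ b α β) (rho x₀ b β γ))
    {ξ η : Bord x₀} (hne : ξ ≠ η) {l : List (Bord x₀)}
    (hhead : l.head? = some ξ) (hlast : l.getLast? = some η) :
    rho x₀ b ξ η ≤ 4 * chainSum x₀ b l := by
  obtain ⟨t, rfl⟩ : ∃ t, l = ξ :: t := by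
    cases l with
    | nil => simp at hhead
    | cons a t => exact ⟨t, by simpa using hhead⟩
  have hη : (ξ :: t).getD t.length ξ = η := by
    rw [List.getLast?_eq_getElem?] at hlast
    simpa [List.getD_eq_getElem?_getD] using congrArg (Option.getD · ξ) hlast
  have ht : 1 ≤ t.length := by
    rcases t with _ | _
    · exact absurd (by simpa using hη) hne
    · simp
  have h := le_four_mul_sum_of_le_two_mul_max (rho_nonneg hb) hq (fun i => (ξ :: t).getD i ξ) ht
  beta_reduce at h
  rw [hη] at h
  rw [chainSum, sum_map_zip_tail_eq_sum_range _ ξ]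
  simpa using h

lemma bddBelow_chainSums (hb : 0 < b) (ξ η : Bord x₀) :
    BddBelow {s : ℝ | ∃ l : List (Bord x₀), l.head? = some ξ ∧ l.getLast? = some η ∧
      s = chainSum x₀ b l} :=
  ⟨0, fun _ ⟨l, _, _, hs⟩ => hs ▸ chainSum_nonneg hb l⟩

lemma Dbar_nonneg (hb : 0 < b) (ξ η : Bord x₀) : 0 ≤ Dbar x₀ b ξ η :=
  Real.sInf_nonneg fun _ ⟨l, _, _, hs⟩ => hs ▸ chainSum_nonneg hb l

lemma Dbar_self (hb : 0 < b) (ξ : Bord x₀) : Dbar x₀ b ξ ξ = 0 :=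
  le_antisymm (csInf_le (bddBelow_chainSums hb ξ ξ) ⟨[ξ], rfl, rfl, by simp [chainSum]⟩)
    (Dbar_nonneg hb ξ ξ)

lemma Dbar_le_rho (hb : 0 < b) (ξ η : Bord x₀) : Dbar x₀ b ξ η ≤ rho x₀ b ξ η :=
  csInf_le (bddBelow_chainSums hb ξ η) ⟨[ξ, η], rfl, rfl, by simp [chainSum]⟩

lemma rho_le_four_mul_Dbar (hb : 0 < b)
    (hq : ∀ α β γ : Bord x₀, rho x₀ b α γ ≤ 2 * max (rho x₀ b α β) (rho x₀ b β γ))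
    {ξ η : Bord x₀} (hne : ξ ≠ η) :
    rho x₀ b ξ η ≤ 4 * Dbar x₀ b ξ η := by
  rw [← div_le_iff₀' four_pos]
  exact le_csInf ⟨_, [ξ, η], rfl, rfl, rfl⟩ fun _ ⟨l, h1, h2, hs⟩ =>
    hs ▸ (div_le_iff₀' four_pos).2 (rho_le_four_mul_chainSum hb hq hne h1 h2)

end ChainDistance

section IsometryAction

lemma bMap_symm_bMap (g : X ≃ᵢ X) (ξ : GromovBoundary x₀) : bMap x₀ g.symm (bMap x₀ g ξ) = ξ := by
  induction ξ using Quot.ind with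
  | mk u => exact congrArg (Quot.mk _) (Subtype.ext (funext fun n => g.symm_apply_apply (u.1 n)))

lemma bordMap_injective (g : X ≃ᵢ X) : Function.Injective (bordMap x₀ g) := by
  refine Function.LeftInverse.injective (g := bordMap x₀ g.symm) fun ξ => ?_
  rcases ξ with x | ξ
  · exact congrArg Sum.inl (g.symm_apply_apply x)
  · exact congrArg Sum.inr (bMap_symm_bMap g ξ)

lemma mem_representingSeqs_bordMap (g : X ≃ᵢ X) (α : Bord x₀) {v : ℕ → X} :
    v ∈ representingSeqs x₀ (bordMap x₀ g α) ↔
      ∃ u ∈ representingSeqs x₀ α, (fun n => g (u n)) = v := by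
  rcases α with x | ξ
  · exact ⟨fun hv => ⟨_, rfl, hv.symm⟩, fun ⟨_, hu, huv⟩ => huv ▸ hu ▸ rfl⟩
  · constructor
    · rintro ⟨v', hv', rfl⟩
      refine ⟨fun n => g.symm (v'.1 n), ⟨⟨_, isGromovSeq_isom x₀ g.symm v'.2⟩, ?_, rfl⟩,
        funext fun n => g.apply_symm_apply _⟩
      rw [← bMap_symm_bMap g ξ, ← hv']
      rfl
    · rintro ⟨_, ⟨u, hu, rfl⟩, rfl⟩
      exact ⟨⟨_, isGromovSeq_isom x₀ g u.2⟩, hu ▸ rfl, rfl⟩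

lemma egp_bordMap (g : X ≃ᵢ X) (α β : Bord x₀) :
    egp x₀ (bordMap x₀ g α) (bordMap x₀ g β) x₀ =
      sInf {t | ∃ u ∈ representingSeqs x₀ α, ∃ v ∈ representingSeqs x₀ β,
        t = gpLiminf u v (g.symm x₀)} := by
  have hmap (u v : ℕ → X) : gpLiminf (fun n => g (u n)) (fun n => g (v n)) x₀ =
      gpLiminf u v (g.symm x₀) := by
    simp only [gpLiminf, gp_isom]
  rw [egp_eq_sInf]
  congr 1
  ext t
  simp only [Set.mem_ofPred_eq, mem_representingSeqs_bordMap]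
  constructor
  · rintro ⟨_, ⟨u, hu, rfl⟩, _, ⟨v, hv, rfl⟩, rfl⟩
    exact ⟨u, hu, v, hv, hmap u v⟩
  · rintro ⟨u, hu, v, hv, rfl⟩
    exact ⟨_, ⟨u, hu, rfl⟩, _, ⟨v, hv, rfl⟩, (hmap u v).symm⟩

variable {g : X ≃ᵢ X} {α β : Bord x₀} {c ε : ℝ}

lemma egp_bordMap_mem_Icc (h : ∀ u ∈ representingSeqs x₀ α, ∀ v ∈ representingSeqs x₀ β,
      ∀ᶠ p : ℕ × ℕ in atTop, |gp (u p.1) (v p.2) (g.symm x₀) - (gp (u p.1) (v p.2) x₀ + c)| ≤ ε) :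
    egp x₀ (bordMap x₀ g α) (bordMap x₀ g β) x₀ ∈
      Set.Icc (egp x₀ α β x₀ + ((c - ε : ℝ) : EReal)) (egp x₀ α β x₀ + ((c + ε : ℝ) : EReal)) := by
  constructor
  · rw [egp_bordMap]
    refine le_sInf fun t ⟨u, hu, v, hv, ht⟩ => ht ▸ ?_
    calc _ ≤ gpLiminf u v x₀ + ((c - ε : ℝ) : EReal) := by gcongr; exact egp_le_gpLiminf hu hv x₀
      _ = liminf (fun p : ℕ × ℕ => ((gp (u p.1) (v p.2) x₀ + (c - ε) : ℝ) : EReal)) atTop :=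
          (liminf_coe_add_coe _ _).symm
      _ ≤ gpLiminf u v (g.symm x₀) := liminf_le_liminf <| (h u hu v hv).mono fun p hp =>
          EReal.coe_le_coe_iff.2 (by linarith [(abs_le.1 hp).1])
  · rw [egp_eq_sInf α β]
    refine le_sInf_add_coe fun t ⟨u, hu, v, hv, ht⟩ => ht ▸ ?_
    calc _ ≤ gpLiminf u v (g.symm x₀) := by rw [egp_bordMap]; exact sInf_le ⟨u, hu, v, hv, rfl⟩
      _ ≤ liminf (fun p : ℕ × ℕ => ((gp (u p.1) (v p.2) x₀ + (c + ε) : ℝ) : EReal)) atTop :=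
          liminf_le_liminf <| (h u hu v hv).mono fun p hp =>
            EReal.coe_le_coe_iff.2 (by linarith [(abs_le.1 hp).2])
      _ = _ := liminf_coe_add_coe _ _

lemma rho_bordMap_mem_Icc (hb : 1 ≤ b) (h : ∀ u ∈ representingSeqs x₀ α,
      ∀ v ∈ representingSeqs x₀ β, ∀ᶠ p : ℕ × ℕ in atTop,
        |gp (u p.1) (v p.2) (g.symm x₀) - (gp (u p.1) (v p.2) x₀ + c)| ≤ ε) :
    rho x₀ b (bordMap x₀ g α) (bordMap x₀ g β) ∈
      Set.Icc (b ^ (-ε) * b ^ (-c) * rho x₀ b α β) (b ^ ε * b ^ (-c) * rho x₀ b α β) := by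
  have hb0 : 0 < b := by linarith
  obtain ⟨hlow, hup⟩ := egp_bordMap_mem_Icc h
  have hne_bot := egp_ne_bot α β x₀
  rw [rho_eq_rpowNegEReal, rho_eq_rpowNegEReal, ← Real.rpow_add hb0, ← Real.rpow_add hb0]
  constructor
  · calc _ = rpowNegEReal b (egp x₀ α β x₀ + ((c + ε : ℝ) : EReal)) := by
          rw [rpowNegEReal_add_coe hb0 hne_bot, neg_add, add_comm]
      _ ≤ _ := rpowNegEReal_le_rpowNegEReal hb (egp_ne_bot _ _ _) hup
  · calc _ ≤ rpowNegEReal b (egp x₀ α β x₀ + ((c - ε : ℝ) : EReal)) :=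
          rpowNegEReal_le_rpowNegEReal hb
            (EReal.add_ne_bot_iff.2 ⟨hne_bot, EReal.coe_ne_bot _⟩) hlow
      _ = _ := by rw [rpowNegEReal_add_coe hb0 hne_bot, neg_sub, sub_eq_add_neg]

end IsometryAction

section BasicAssumption

variable {δ : ℝ} {lm : (X → ℝ) → Bdry x₀ b} {hinv : Bdry x₀ b → (X → ℝ)}

lemma eventually_abs_gp_sub_gpHoro_le (hδ : 0 ≤ δ) (hhyp : IsHyperbolic X δ)
    (hBA : BasicAssumption x₀ b lm hinv) {α : Bord x₀} {u : ℕ → X}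
    (hu : u ∈ representingSeqs x₀ α) (y : X) :
    ∀ᶠ n in atTop, |gp y (u n) x₀ - gpHoro x₀ (hB x₀ b hinv α) y| ≤ 2 * δ := by
  rcases α with x | ξ
  · refine Eventually.of_forall fun n => ?_
    rw [show u n = x from congrFun hu n, hB, gpHoro_hfun, sub_self, abs_zero]
    positivity
  obtain ⟨u, hu, rfl⟩ := hu
  obtain ⟨hXh, hunbdd⟩ := hBA.inv_mem (Bdry.ofB x₀ b ξ)
  have hdeep (k : ℕ) : ∃ z, hinv (Bdry.ofB x₀ b ξ) z ≤ -k := by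
    obtain ⟨_, ⟨z, rfl⟩, hz⟩ := not_bddBelow_iff.1 hunbdd (-k)
    exact ⟨z, hz.le⟩
  choose z hz using hdeep
  have hzlim : Tendsto (fun k => hinv (Bdry.ofB x₀ b ξ) (z k)) atTop atBot :=
    tendsto_atBot_mono hz (tendsto_neg_atTop_atBot.comp tendsto_natCast_atTop_atTop)
  obtain ⟨hzG, hzξ⟩ := hBA.localMin _ ⟨hXh, hunbdd⟩ z hzlim
  rw [hBA.right_inv] at hzξ
  have hzu : GromovEquiv x₀ z u.1 := gromovEquiv_of_mk_eq hhyp (hzξ.symm.trans hu.symm)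
  refine hzu.eventually_abs_gp_sub_le hhyp hzG ?_
  filter_upwards [hzlim.eventually (eventually_le_atBot (-dist y x₀))] with k hk
  exact abs_gp_sub_gpHoro_le hhyp hXh hk

lemma eventually_abs_gp_sub_gp_sub_le (hδ : 0 ≤ δ) (hhyp : IsHyperbolic X δ)
    (hBA : BasicAssumption x₀ b lm hinv) {α β : Bord x₀} {u v : ℕ → X}
    (hu : u ∈ representingSeqs x₀ α) (hv : v ∈ representingSeqs x₀ β) (y : X) :
    ∀ᶠ p : ℕ × ℕ in atTop, |gp (u p.1) (v p.2) y -
      (gp (u p.1) (v p.2) x₀ + (hB x₀ b hinv α y + hB x₀ b hinv β y) / 2)| ≤ 4 * δ := by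
  rw [← prod_atTop_atTop_eq]
  filter_upwards [(eventually_abs_gp_sub_gpHoro_le hδ hhyp hBA hu y).prod_mk
    (eventually_abs_gp_sub_gpHoro_le hδ hhyp hBA hv y)] with p ⟨h1, h2⟩
  rw [gp_eq_gp_add_dist_sub _ _ y x₀]
  unfold gpHoro at h1 h2
  rw [abs_le] at h1 h2 ⊢
  constructor <;> linarith

end BasicAssumption

theorem visual_quasi_metric_distortion_general
    {X : Type*} [MetricSpace X]
    (x₀ : X) (δ b : ℝ) (hδ : 0 < δ) (hb : 1 < b) (hb2 : b ≤ (2:ℝ) ^ (1/δ))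
    (hhyp : IsHyperbolic X δ)
    (lm : (X → ℝ) → Bdry x₀ b) (hinv : Bdry x₀ b → (X → ℝ))
    (hBA : BasicAssumption x₀ b lm hinv) :
    ∀ (g : X ≃ᵢ X) (ξ η : Bord x₀),
      1 / (4 * b ^ (6 * δ)) *
          b ^ (-((hB x₀ b hinv ξ (g.symm x₀) + hB x₀ b hinv η (g.symm x₀)) / 2)) *
          Dbar x₀ b ξ η ≤
        Dbar x₀ b (bordMap x₀ g ξ) (bordMap x₀ g η) ∧
      Dbar x₀ b (bordMap x₀ g ξ) (bordMap x₀ g η) ≤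
        4 * b ^ (6 * δ) *
          b ^ (-((hB x₀ b hinv ξ (g.symm x₀) + hB x₀ b hinv η (g.symm x₀)) / 2)) *
          Dbar x₀ b ξ η := by
  intro g ξ η
  have hb0 : 0 < b := by linarith
  rcases eq_or_ne ξ η with rfl | hne
  · simp [Dbar_self hb0]
  have hq := rho_le_two_mul_max hδ hb hb2 hhyp (x₀ := x₀)
  obtain ⟨hlow, hup⟩ := rho_bordMap_mem_Icc (g := g) hb.le fun u hu v hv =>
    eventually_abs_gp_sub_gp_sub_le hδ.le hhyp hBA hu hv (g.symm x₀)
  set K := b ^ (-((hB x₀ b hinv ξ (g.symm x₀) + hB x₀ b hinv η (g.symm x₀)) / 2))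
  have hρ := rho_nonneg hb0 ξ η
  have hD := Dbar_nonneg hb0 ξ η
  constructor
  · calc 1 / (4 * b ^ (6 * δ)) * K * Dbar x₀ b ξ η
        = b ^ (-(6 * δ)) * K * Dbar x₀ b ξ η / 4 := by rw [Real.rpow_neg hb0.le]; field_simp
      _ ≤ b ^ (-(4 * δ)) * K * rho x₀ b ξ η / 4 := by
          gcongr
          exacts [hb.le, by linarith, Dbar_le_rho hb0 ξ η]
      _ ≤ Dbar x₀ b (bordMap x₀ g ξ) (bordMap x₀ g η) := by
          linarith [rho_le_four_mul_Dbar hb0 hq ((bordMap_injective g).ne hne)]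
  · calc Dbar x₀ b (bordMap x₀ g ξ) (bordMap x₀ g η)
        ≤ b ^ (4 * δ) * K * rho x₀ b ξ η := (Dbar_le_rho hb0 _ _).trans hup
      _ ≤ b ^ (6 * δ) * K * (4 * Dbar x₀ b ξ η) := by
          gcongr
          exacts [hb.le, by linarith, rho_le_four_mul_Dbar hb0 hq hne]
      _ = 4 * b ^ (6 * δ) * K * Dbar x₀ b ξ η := by ring

/-- **Distortion of the visual quasi-metric under isometries.** -/
theorem visual_quasi_metric_distortion
    {X : Type*} [MetricSpace X] [TopologicalSpace.SeparableSpace X]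
    (x₀ : X) (δ b : ℝ) (hδ : 0 < δ) (hb : 1 < b) (hb2 : b ≤ (2:ℝ) ^ (1/δ))
    (hgeo : IsGeodesic X) (hhyp : IsHyperbolic X δ)
    (lm : (X → ℝ) → Bdry x₀ b) (hinv : Bdry x₀ b → (X → ℝ))
    (hBA : BasicAssumption x₀ b lm hinv) :
    ∀ (g : X ≃ᵢ X) (ξ η : Bord x₀),
      1 / (4 * b ^ (6 * δ)) *
          b ^ (-((hB x₀ b hinv ξ (g.symm x₀) + hB x₀ b hinv η (g.symm x₀)) / 2)) *
          Dbar x₀ b ξ η ≤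
        Dbar x₀ b (bordMap x₀ g ξ) (bordMap x₀ g η) ∧
      Dbar x₀ b (bordMap x₀ g ξ) (bordMap x₀ g η) ≤
        4 * b ^ (6 * δ) *
          b ^ (-((hB x₀ b hinv ξ (g.symm x₀) + hB x₀ b hinv η (g.symm x₀)) / 2)) *
          Dbar x₀ b ξ η :=
  visual_quasi_metric_distortion_general x₀ δ b hδ hb hb2 hhyp lm hinv hBA

end Paper
end
end

section
/- Let X be a Gromov δ-hyperbolic metric space with basepoint x₀. Then for every horofunction h ∈ X^h and all points x, y ∈ X: ⟨x,y⟩_{x₀} ≥ min{−h(x), −h(y)} − δ. Moreover, for every z ∈ X: ⟨x,y⟩_{x₀} ≥ min{−h_x(z), −h_y(z)} − δ. -/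
open Filter Topology MeasureTheory TopologicalSpace ENNReal

noncomputable section

namespace Paper

variable {X : Type*} [MetricSpace X]


variable {x₀ : X} {b : ℝ}

/-- **Horofunctions and the Gromov product.** -/
theorem horofunction_gromov_product_bound
    {X : Type*} [MetricSpace X] (x₀ : X) (δ : ℝ)
    (hhyp : IsHyperbolic X δ)
    (h : X → ℝ) (hh : h ∈ Xh x₀) (x y : X) :
    min (-h x) (-h y) - δ ≤ gp x y x₀ ∧
    ∀ z : X, min (-(hfun x₀ x z)) (-(hfun x₀ y z)) - δ ≤ gp x y x₀ := by
  constructor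
  · -- closed set argument
    have hclosed : IsClosed {f : X → ℝ | min (-f x) (-f y) - δ ≤ gp x y x₀} := by
      have hc : Continuous fun f : X → ℝ => min (-f x) (-f y) - δ :=
        (((continuous_apply x).neg.min (continuous_apply y).neg).sub continuous_const)
      exact isClosed_le hc continuous_const
    have hsub : Set.range (hfun x₀) ⊆ {f : X → ℝ | min (-f x) (-f y) - δ ≤ gp x y x₀} := by
      rintro f ⟨z, rfl⟩
      have h1 : -(hfun x₀ z x) ≤ gp x z x₀ := by
        simp only [hfun, gp]
        have := dist_triangle z x x₀
        have := dist_comm x z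
        linarith
      have h2 : -(hfun x₀ z y) ≤ gp z y x₀ := by
        simp only [hfun, gp]
        have := dist_triangle z y x₀
        have := dist_comm z y
        linarith
      have h3 := hhyp x z y x₀
      simp only [Set.mem_setOf_eq]
      have : min (-(hfun x₀ z x)) (-(hfun x₀ z y)) ≤ min (gp x z x₀) (gp z y x₀) :=
        min_le_min h1 h2
      linarith [le_of_eq (rfl : min (gp x z x₀) (gp z y x₀) = min (gp x z x₀) (gp z y x₀)),
        h3]
    exact closure_minimal hsub hclosed hh
  · intro z
    have h1 : -(hfun x₀ x z) ≤ gp x z x₀ := by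
      simp only [hfun, gp]
      have := dist_triangle x z x₀
      have := dist_comm z x
      linarith
    have h2 : -(hfun x₀ y z) ≤ gp z y x₀ := by
      simp only [hfun, gp]
      have := dist_triangle y z x₀
      have := dist_comm z y
      linarith
    have h3 := hhyp x z y x₀
    have : min (-(hfun x₀ x z)) (-(hfun x₀ y z)) ≤ min (gp x z x₀) (gp z y x₀) :=
      min_le_min h1 h2
    linarith

end Paper
end
end

section
/- Let X be a Gromov δ-hyperbolic metric space with basepoint x₀ and let h ∈ X^h_∞ be a horofunction with inf h = −∞. If (xₙ) is a sequence in X with h_{xₙ} → h pointwise, and (yₙ) is a sequence in X with h(yₙ) → −∞, then both (xₙ) and (yₙ) are Gromov sequences. -/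
open Filter Topology MeasureTheory TopologicalSpace ENNReal

noncomputable section

namespace Paper

variable {X : Type*} [MetricSpace X]


variable {x₀ : X} {b : ℝ}

/-! Since `⟨a, z⟩_{x₀} = (d(z, x₀) - h_a(z)) / 2`, pointwise convergence `h_{xₙ} → h` gives
`⟨xₙ, z⟩_{x₀} ≥ -(h(z) + 1) / 2` for large `n`. As `inf h = -∞`, every tail of `(xₙ)` has
large Gromov products with one fixed far point `z`, which by `δ`-hyperbolicity makes `(xₙ)` a
Gromov sequence. Choosing `k(n) ≥ n` with `⟨x_{k(n)}, yₙ⟩_{x₀} ≥ -(h(yₙ) + 1) / 2 → ∞` makes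
`(yₙ)` equivalent to the Gromov sequence `(x_{k(n)})`, hence Gromov itself. -/

lemma gp_comm_s9 (a c w : X) : gp a c w = gp c a w := by
  unfold gp; rw [dist_comm a c]; ring

section Hyperbolic

variable {δ : ℝ} (hX : IsHyperbolic X δ)
include hX

theorem IsHyperbolic.tendsto_gp_atTop {ι : Type*} {l : Filter ι} {a b c : ι → X} {w : X}
    (hac : Tendsto (fun i => gp (a i) (c i) w) l atTop)
    (hcb : Tendsto (fun i => gp (c i) (b i) w) l atTop) :
    Tendsto (fun i => gp (a i) (b i) w) l atTop :=
  tendsto_atTop.2 fun M =>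
    ((tendsto_atTop.1 hac (M + δ)).and (tendsto_atTop.1 hcb (M + δ))).mono fun i hi => by
      linarith [hX (a i) (c i) (b i) w, le_min hi.1 hi.2]

theorem IsGromovSeq.of_gromovEquiv {u v : ℕ → X} (hu : IsGromovSeq x₀ u)
    (huv : GromovEquiv x₀ u v) : IsGromovSeq x₀ v := by
  have hfst : Tendsto (Prod.fst : ℕ × ℕ → ℕ) atTop atTop := by
    rw [← prod_atTop_atTop_eq]; exact tendsto_fst
  have hsnd : Tendsto (Prod.snd : ℕ × ℕ → ℕ) atTop atTop := by
    rw [← prod_atTop_atTop_eq]; exact tendsto_snd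
  have hvu : Tendsto (fun p : ℕ × ℕ => gp (v p.1) (u p.1) x₀) atTop atTop :=
    (huv.comp hfst).congr fun p => gp_comm_s9 _ _ _
  exact hX.tendsto_gp_atTop hvu (hX.tendsto_gp_atTop hu (huv.comp hsnd))

theorem IsHyperbolic.isGromovSeq_of_forall_exists_le_gp {x : ℕ → X}
    (hx : ∀ M : ℝ, ∃ z : X, ∀ᶠ n in atTop, M ≤ gp (x n) z x₀) : IsGromovSeq x₀ x := by
  refine tendsto_atTop.2 fun M => ?_
  obtain ⟨z, hz⟩ := hx (M + δ)
  rw [← prod_atTop_atTop_eq]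
  filter_upwards [hz.prod_mk hz] with p hp
  have hδ := hX (x p.1) z (x p.2) x₀
  rw [gp_comm_s9 z] at hδ
  linarith [le_min hp.1 hp.2]

end Hyperbolic

theorem IsGromovSeq.comp_tendsto {u : ℕ → X} (hu : IsGromovSeq x₀ u) {k : ℕ → ℕ}
    (hk : Tendsto k atTop atTop) : IsGromovSeq x₀ (u ∘ k) :=
  hu.comp (hk.prod_atTop hk)

lemma gp_eq_dist_sub_hfun (a z w : X) : gp a z w = (dist z w - hfun w a z) / 2 := by
  simp only [gp, hfun, dist_comm z a]; ring

lemma neg_div_two_le_gp_of_hfun_le {a z w : X} {t : ℝ} (ht : hfun w a z ≤ t) :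
    -t / 2 ≤ gp a z w := by
  rw [gp_eq_dist_sub_hfun]
  linarith [dist_nonneg (x := z) (y := w)]

lemma eventually_le_gp_of_tendsto_hfun {x : ℕ → X} {z : X} {c : ℝ}
    (hz : Tendsto (fun n => hfun x₀ (x n) z) atTop (𝓝 c)) :
    ∀ᶠ n in atTop, -(c + 1) / 2 ≤ gp (x n) z x₀ :=
  (hz.eventually (eventually_lt_nhds (lt_add_one c))).mono fun _ hn =>
    neg_div_two_le_gp_of_hfun_le hn.le

lemma exists_tendsto_gromovEquiv_comp {h : X → ℝ} {x y : ℕ → X}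
    (hx : ∀ z : X, Tendsto (fun n => hfun x₀ (x n) z) atTop (𝓝 (h z)))
    (hy : Tendsto (fun n => h (y n)) atTop atBot) :
    ∃ k : ℕ → ℕ, Tendsto k atTop atTop ∧ GromovEquiv x₀ (x ∘ k) y := by
  choose k hk_ge hk_gp using fun n =>
    ((eventually_ge_atTop n).and (eventually_le_gp_of_tendsto_hfun (hx (y n)))).exists
  have hbound : Tendsto (fun n => -(h (y n) + 1) / 2) atTop atTop :=
    (tendsto_neg_atBot_atTop.comp (tendsto_atBot_add_const_right _ 1 hy)).atTop_div_const
      two_pos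
  exact ⟨k, tendsto_atTop_mono hk_ge tendsto_id, tendsto_atTop_mono hk_gp hbound⟩

theorem horofunction_sequences_are_gromov_general
    {X : Type*} [MetricSpace X] (x₀ : X) (δ : ℝ)
    (hhyp : IsHyperbolic X δ)
    (h : X → ℝ) (hinf : ¬ BddBelow (Set.range h))
    (x y : ℕ → X)
    (hx : ∀ z : X, Tendsto (fun n => hfun x₀ (x n) z) atTop (𝓝 (h z)))
    (hy : Tendsto (fun n => h (y n)) atTop atBot) :
    IsGromovSeq x₀ x ∧ IsGromovSeq x₀ y := by
  have hxG : IsGromovSeq x₀ x := hhyp.isGromovSeq_of_forall_exists_le_gp fun M => by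
    obtain ⟨_, ⟨z, rfl⟩, hz⟩ := not_bddBelow_iff.mp hinf (-(2 * M + 1))
    exact ⟨z, (eventually_le_gp_of_tendsto_hfun (hx z)).mono fun n hn => by linarith⟩
  obtain ⟨k, hk, hequiv⟩ := exists_tendsto_gromovEquiv_comp hx hy
  exact ⟨hxG, (hxG.comp_tendsto hk).of_gromovEquiv hhyp hequiv⟩

/-- **Sequences attached to an infinite horofunction are Gromov.** -/
theorem horofunction_sequences_are_gromov
    {X : Type*} [MetricSpace X] (x₀ : X) (δ : ℝ)
    (hhyp : IsHyperbolic X δ)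
    (h : X → ℝ) (hh : h ∈ Xh x₀) (hinf : ¬ BddBelow (Set.range h))
    (x y : ℕ → X)
    (hx : ∀ z : X, Tendsto (fun n => hfun x₀ (x n) z) atTop (𝓝 (h z)))
    (hy : Tendsto (fun n => h (y n)) atTop atBot) :
    IsGromovSeq x₀ x ∧ IsGromovSeq x₀ y :=
  horofunction_sequences_are_gromov_general x₀ δ hhyp h hinf x y hx hy

end Paper
end
end

section
/- Let X be a Gromov δ-hyperbolic metric space with basepoint x₀ and let h ∈ X^h_∞ be a horofunction with inf h = −∞. Let (xₙ) be a sequence with h_{xₙ} → h pointwise and (yₙ) a sequence with h(yₙ) → −∞. Then (xₙ) and (yₙ) are equivalent Gromov sequences, i.e. ⟨xₙ, yₙ⟩_{x₀} → ∞; in particular, all sequences (yₙ) with h(yₙ) → −∞ converge to the same point of the Gromov boundary ∂X. -/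
open Filter Topology MeasureTheory TopologicalSpace ENNReal

noncomputable section

namespace Paper

variable {X : Type*} [MetricSpace X]


variable {x₀ : X} {b : ℝ}

lemma gpComm {X : Type*} [MetricSpace X] (a b w : X) : gp a b w = gp b a w := by
  unfold gp; rw [dist_comm a b]; ring

lemma minAux {f g : ℕ → ℝ} (hf : Tendsto f atTop atTop) (hg : Tendsto g atTop atTop) (δ : ℝ) :
    Tendsto (fun n => min (f n) (g n) - δ) atTop atTop := by
  rw [tendsto_atTop]
  intro M
  filter_upwards [tendsto_atTop.1 hf (M + δ), tendsto_atTop.1 hg (M + δ)] with n h1 h2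
  have := le_min h1 h2
  linarith

/-- **Sequences attached to an infinite horofunction are equivalent.** -/
theorem horofunction_sequences_equivalent
    {X : Type*} [MetricSpace X] (x₀ : X) (δ : ℝ)
    (hhyp : IsHyperbolic X δ)
    (h : X → ℝ) (hh : h ∈ Xh x₀) (hinf : ¬ BddBelow (Set.range h))
    (x y : ℕ → X)
    (hx : ∀ z : X, Tendsto (fun n => hfun x₀ (x n) z) atTop (𝓝 (h z)))
    (hy : Tendsto (fun n => h (y n)) atTop atBot) :
    IsGromovSeq x₀ x ∧ IsGromovSeq x₀ y ∧ GromovEquiv x₀ x y ∧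
    ∀ y' : ℕ → X, Tendsto (fun n => h (y' n)) atTop atBot → GromovEquiv x₀ y y' := by
  classical
  set g : X → ℝ := fun z => (dist z x₀ - h z) / 2 with hgdef
  have hgt : ∀ z, Tendsto (fun n => gp (x n) z x₀) atTop (𝓝 (g z)) := by
    intro z
    have he : ∀ n, gp (x n) z x₀ = (dist z x₀ - hfun x₀ (x n) z) / 2 := by
      intro n; unfold gp hfun; rw [dist_comm z (x n)]; ring
    simp only [he]
    exact (tendsto_const_nhds.sub (hx z)).div_const 2
  have hhlb : ∀ z, -dist z x₀ ≤ h z := by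
    intro z
    refine ge_of_tendsto (hx z) (Eventually.of_forall fun n => ?_)
    unfold hfun
    have := dist_triangle (x n) z x₀
    rw [dist_comm z (x n)]
    linarith
  have hge : ∀ z, -h z ≤ g z := by
    intro z
    have := hhlb z
    simp only [hgdef]
    linarith
  have hnegh : Tendsto (fun n => -h (y n)) atTop atTop := tendsto_neg_atBot_atTop.comp hy
  have hgy : Tendsto (fun n => g (y n)) atTop atTop :=
    tendsto_atTop_mono (fun n => hge (y n)) hnegh
  have key : ∀ a c : X, min (g a) (g c) - δ ≤ gp a c x₀ := by
    intro a c
    have ha : Tendsto (fun k => gp a (x k) x₀) atTop (𝓝 (g a)) :=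
      (hgt a).congr fun k => (gpComm (x k) a x₀)
    have t1 : Tendsto (fun k => min (gp a (x k) x₀) (gp (x k) c x₀) - δ) atTop
        (𝓝 (min (g a) (g c) - δ)) := (ha.min (hgt c)).sub tendsto_const_nhds
    exact le_of_tendsto t1 (Eventually.of_forall fun k => hhyp a (x k) c x₀)
  have hxG : IsGromovSeq x₀ x := by
    rw [IsGromovSeq, tendsto_atTop]
    intro M
    obtain ⟨k, hk⟩ := (tendsto_atTop.1 hgy (M + δ + 1)).exists
    have hlt : M + δ < g (y k) := by linarith
    have hev : ∀ᶠ n in atTop, M + δ ≤ gp (x n) (y k) x₀ :=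
      (hgt (y k)).eventually (eventually_ge_nhds hlt)
    obtain ⟨N, hN⟩ := eventually_atTop.1 hev
    refine eventually_atTop.2 ⟨(N, N), fun p hp => ?_⟩
    have h1 := hN p.1 hp.1
    have h2 : M + δ ≤ gp (y k) (x p.2) x₀ := by
      rw [gpComm]; exact hN p.2 hp.2
    have hyp := hhyp (x p.1) (y k) (x p.2) x₀
    have := le_min h1 h2
    linarith
  have hgx : Tendsto (fun n => g (x n)) atTop atTop := by
    rw [tendsto_atTop]
    intro M
    obtain ⟨N, hN⟩ := eventually_atTop.1 (tendsto_atTop.1 hxG M)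
    refine eventually_atTop.2 ⟨max N.1 N.2, fun n hn => ?_⟩
    refine ge_of_tendsto (hgt (x n)) (eventually_atTop.2 ⟨max N.1 N.2, fun m hm => ?_⟩)
    exact hN (m, n) ⟨le_trans (le_max_left _ _) hm, le_trans (le_max_right _ _) hn⟩
  have equivAux : ∀ (u v : ℕ → X), Tendsto (fun n => g (u n)) atTop atTop →
      Tendsto (fun n => g (v n)) atTop atTop → GromovEquiv x₀ u v := by
    intro u v hu hv
    exact tendsto_atTop_mono (fun n => key (u n) (v n)) (minAux hu hv δ)
  have hyG : IsGromovSeq x₀ y := by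
    rw [IsGromovSeq, tendsto_atTop]
    intro M
    obtain ⟨N, hN⟩ := eventually_atTop.1 (tendsto_atTop.1 hgy (M + δ))
    refine eventually_atTop.2 ⟨(N, N), fun p hp => ?_⟩
    have := key (y p.1) (y p.2)
    have := le_min (hN p.1 hp.1) (hN p.2 hp.2)
    linarith
  refine ⟨hxG, hyG, equivAux x y hgx hgy, fun y' hy' => ?_⟩
  have hgy' : Tendsto (fun n => g (y' n)) atTop atTop :=
    tendsto_atTop_mono (fun n => hge (y' n)) (tendsto_neg_atBot_atTop.comp hy')
  exact equivAux y y' hgy hgy'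

end Paper
end
end
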